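/- arXiv:1006.1414 — 3 statements merged into one kernel-verified Lean document; each statement's English description precedes it below -/
import Mathlib

section
/- If two initialized runs ρ, ρ' of Γ of the same length satisfy ρ ∼_A ρ', then the second components of the lifted runs in Γ̂_A agree at every position: writing ρ̂[i] = (ρ[i], S_i) and ρ̂'[i] = (ρ'[i], S'_i), we have S_i = S'_i for all i ≤ |ρ|. -/
/-- A game arena: transition relation over states `Q`, joint actions `Ag → Act`,
initial states, a labeling of states by atomic propositions `AP`, and for each
agent the set of atomic propositions it can observe. -/
structure Arena (Q Ag Act AP : Type) where
  delta : Q → (Ag → Act) → Q → Prop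
  init : Set Q
  label : Q → Set AP
  obs : Ag → Set AP

namespace Arena

variable {Q Ag Act AP : Type}

/-- `Prop_A`: the atomic propositions observable by coalition `A`. -/
def propA (G : Arena Q Ag Act AP) (A : Set Ag) : Set AP := ⋃ a ∈ A, G.obs a

/-- `λ_A(q) = λ(q) ∩ Prop_A`. -/
def labelA (G : Arena Q Ag Act AP) (A : Set Ag) (q : Q) : Set AP :=
  G.label q ∩ G.propA A

/-- An initialized infinite run of the arena. -/
structure InfRun (G : Arena Q Ag Act AP) where
  st : ℕ → Q
  ac : ℕ → Ag → Act
  init_mem : st 0 ∈ G.init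
  step : ∀ i, G.delta (st i) (ac i) (st (i + 1))

/-- The prefixes `ρ[0..i]` and `ρ'[0..i]` are `A`-indistinguishable. -/
def SimPrefix (G : Arena Q Ag Act AP) (A : Set Ag) (ρ ρ' : G.InfRun) (i : ℕ) : Prop :=
  (∀ j < i, ∀ a ∈ A, ρ.ac j a = ρ'.ac j a) ∧
  (∀ j ≤ i, G.labelA A (ρ.st j) = G.labelA A (ρ'.st j))

/-- Full `A`-indistinguishability of infinite runs. -/
def Sim (G : Arena Q Ag Act AP) (A : Set Ag) (ρ ρ' : G.InfRun) : Prop :=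
  (∀ j, ∀ a ∈ A, ρ.ac j a = ρ'.ac j a) ∧
  (∀ j, G.labelA A (ρ.st j) = G.labelA A (ρ'.st j))

/-- The `A`-observation history `λ_A(ρ[0]) ⋯ λ_A(ρ[i])`. -/
def obsHist (G : Arena Q Ag Act AP) (A : Set Ag) (ρ : G.InfRun) (i : ℕ) : List (Set AP) :=
  (List.range (i + 1)).map fun j => G.labelA A (ρ.st j)

/-- A strategy `σ` for coalition `A` is compatible with a run `ρ` iff at every
position the `A`-part of the action taken is the one prescribed by `σ` on the
`A`-observation history so far. -/
def Compatible (G : Arena Q Ag Act AP) (A : Set Ag)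
    (σ : List (Set AP) → Ag → Act) (ρ : G.InfRun) : Prop :=
  ∀ i, ∀ a ∈ A, σ (G.obsHist A ρ i) a = ρ.ac i a

/-- `out(S, c_A, Z)`: successors of states in `S` under some action agreeing with
`cA` on `A`, whose `A`-observation is `Z`. -/
def out (G : Arena Q Ag Act AP) (A : Set Ag) (S : Set Q) (cA : Ag → Act) (Z : Set AP) :
    Set Q :=
  {s' | ∃ s ∈ S, ∃ c : Ag → Act,
    (∀ a ∈ A, c a = cA a) ∧ G.delta s c s' ∧ G.labelA A s' = Z}

/-- The subset-construction arena `Γ̂_A`. -/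
def hatArena (G : Arena Q Ag Act AP) (A : Set Ag) : Arena (Q × Set Q) Ag Act AP where
  delta := fun p c p' =>
    G.delta p.1 c p'.1 ∧ p'.2 = G.out A p.2 c (G.labelA A p'.1)
  init := {p | p.1 ∈ G.init ∧ p.2 = {s ∈ G.init | G.labelA A s = G.labelA A p.1}}
  label := fun p => G.label p.1
  obs := G.obs

/-- The second components of the lift of a run `ρ` to `Γ̂_A`. -/
def liftS (G : Arena Q Ag Act AP) (A : Set Ag) (ρ : G.InfRun) : ℕ → Set Q
  | 0 => {s ∈ G.init | G.labelA A s = G.labelA A (ρ.st 0)}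
  | i + 1 => G.out A (G.liftS A ρ i) (ρ.ac i) (G.labelA A (ρ.st (i + 1)))

/-- The lift of an initialized run of `Γ` to `Γ̂_A`. -/
def lift (G : Arena Q Ag Act AP) (A : Set Ag) (ρ : G.InfRun) : (G.hatArena A).InfRun where
  st := fun i => (ρ.st i, G.liftS A ρ i)
  ac := ρ.ac
  init_mem := ⟨ρ.init_mem, rfl⟩
  step := fun i => ⟨ρ.step i, rfl⟩

end Arena

namespace Arena

variable {Q Ag Act AP : Type}

theorem out_congr_of_eqOn (G : Arena Q Ag Act AP) (A : Set Ag) (S : Set Q) {cA cA' : Ag → Act}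
    (h : ∀ a ∈ A, cA a = cA' a) (Z : Set AP) : G.out A S cA Z = G.out A S cA' Z := by
  ext s'
  constructor <;> rintro ⟨s, hs, c, hc, hδ, hZ⟩
  · exact ⟨s, hs, c, fun a ha => (hc a ha).trans (h a ha), hδ, hZ⟩
  · exact ⟨s, hs, c, fun a ha => (hc a ha).trans (h a ha).symm, hδ, hZ⟩

end Arena

/-- if `ρ[0..n] ∼_A ρ'[0..n]` then the second components of the
lifted runs agree at every position `i ≤ n`. -/
theorem liftS_eq_of_simPrefix {Q Ag Act AP : Type} (G : Arena Q Ag Act AP)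
    (A : Set Ag) (ρ ρ' : G.InfRun) (n : ℕ)
    (hsim : G.SimPrefix A ρ ρ' n) :
    ∀ i ≤ n, G.liftS A ρ i = G.liftS A ρ' i := by
  obtain ⟨hac, hlab⟩ := hsim
  intro i hi
  induction i with
  | zero => rw [Arena.liftS, Arena.liftS, hlab 0 hi]
  | succ k ih =>
    rw [Arena.liftS, Arena.liftS, ih (by omega), hlab (k + 1) hi]
    exact G.out_congr_of_eqOn A _ (hac k (by omega)) _
end

section
/- For any initialized run ρ of Γ with lift ρ̂ in Γ̂_A and ρ̂[i] = (q_i, S_i): the second component S_i equals exactly the set of states r ∈ Q such that there is an initialized run ρ' of Γ of length i with ρ'[0..i] ∼_A ρ[0..i] and ρ'[i] = r. -/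
namespace Arena

variable {Q Ag Act AP : Type}

/-- An initialized finite run of length `n` (transitions for `i < n`). -/
structure FinRun (G : Arena Q Ag Act AP) (n : ℕ) where
  st : ℕ → Q
  ac : ℕ → Ag → Act
  init_mem : st 0 ∈ G.init
  step : ∀ i < n, G.delta (st i) (ac i) (st (i + 1))

end Arena

/-! Both sides obey the same recursion. At position `0` they are the initial states that
look like `ρ[0]` to `A`. A run of length `i + 1` that `A` cannot tell apart from `ρ` is such a
run of length `i` followed by one transition whose `A`-part is `ρ`'s `i`-th action and whose
target looks like `ρ[i + 1]`; its possible endpoints are therefore `out` of the previous ones. -/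

namespace Arena

variable {Q Ag Act AP : Type} {G : Arena Q Ag Act AP} {m n : ℕ}

namespace FinRun

def restrict (ρ : G.FinRun n) (h : m ≤ n) : G.FinRun m where
  st := ρ.st
  ac := ρ.ac
  init_mem := ρ.init_mem
  step j hj := ρ.step j (hj.trans_le h)

def snoc (ρ : G.FinRun n) (c : Ag → Act) (r : Q) (h : G.delta (ρ.st n) c r) :
    G.FinRun (n + 1) where
  st j := if j ≤ n then ρ.st j else r
  ac := Function.update ρ.ac n c
  init_mem := by simpa using ρ.init_mem
  step j hj := by
    rcases Nat.lt_succ_iff_lt_or_eq.mp hj with hj | rfl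
    · simpa [hj.le, Nat.succ_le_of_lt hj, hj.ne] using ρ.step j hj
    · simpa using h

variable (ρ : G.FinRun n) (c : Ag → Act) (r : Q) (h : G.delta (ρ.st n) c r)

theorem snoc_st_of_le {j : ℕ} (hj : j ≤ n) : (ρ.snoc c r h).st j = ρ.st j := if_pos hj

theorem snoc_st_succ : (ρ.snoc c r h).st (n + 1) = r := if_neg n.not_succ_le_self

theorem snoc_ac_of_lt {j : ℕ} (hj : j < n) : (ρ.snoc c r h).ac j = ρ.ac j :=
  Function.update_of_ne hj.ne _ _

theorem snoc_ac_self : (ρ.snoc c r h).ac n = c := Function.update_self _ _ _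

end FinRun

def consistentStates (G : Arena Q Ag Act AP) (A : Set Ag) (cA : ℕ → Ag → Act)
    (Z : ℕ → Set AP) (n : ℕ) : Set Q :=
  {r | ∃ ρ : G.FinRun n, (∀ j < n, ∀ a ∈ A, ρ.ac j a = cA j a) ∧
    (∀ j ≤ n, G.labelA A (ρ.st j) = Z j) ∧ ρ.st n = r}

variable (G : Arena Q Ag Act AP) (A : Set Ag) (cA : ℕ → Ag → Act) (Z : ℕ → Set AP)

theorem consistentStates_zero :
    G.consistentStates A cA Z 0 = {s ∈ G.init | G.labelA A s = Z 0} := by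
  ext r
  constructor
  · rintro ⟨ρ, -, hZ, rfl⟩
    exact ⟨ρ.init_mem, hZ 0 le_rfl⟩
  · rintro ⟨hr, hZ⟩
    refine ⟨⟨fun _ => r, cA, hr, fun j hj => absurd hj j.not_lt_zero⟩,
      fun j hj => absurd hj j.not_lt_zero, fun j hj => ?_, rfl⟩
    rwa [Nat.le_zero.mp hj]

theorem consistentStates_succ :
    G.consistentStates A cA Z (n + 1) =
      G.out A (G.consistentStates A cA Z n) (cA n) (Z (n + 1)) := by
  ext r
  constructor
  · rintro ⟨ρ, hac, hZ, rfl⟩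
    exact ⟨ρ.st n, ⟨ρ.restrict n.le_succ, fun j hj => hac j (hj.trans n.lt_succ_self),
        fun j hj => hZ j (hj.trans n.le_succ), rfl⟩,
      ρ.ac n, hac n n.lt_succ_self, ρ.step n n.lt_succ_self, hZ (n + 1) le_rfl⟩
  · rintro ⟨s, ⟨ρ, hac, hZ, rfl⟩, c, hc, hδ, hr⟩
    refine ⟨ρ.snoc c r hδ, fun j hj => ?_, fun j hj => ?_, ρ.snoc_st_succ c r hδ⟩
    · rcases Nat.lt_succ_iff_lt_or_eq.mp hj with hj | rfl
      · rw [ρ.snoc_ac_of_lt c r hδ hj]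
        exact hac j hj
      · rw [ρ.snoc_ac_self]
        exact hc
    · rcases Nat.le_succ_iff.mp hj with hj | rfl
      · rw [ρ.snoc_st_of_le c r hδ hj]
        exact hZ j hj
      · rw [ρ.snoc_st_succ]
        exact hr

end Arena

/-- the second component `S_i` of the lift of `ρ` is exactly the
set of states `r` reachable at position `i` by some initialized run of length
`i` whose prefix is `A`-indistinguishable from `ρ[0..i]`. -/
theorem liftS_eq_indist_states {Q Ag Act AP : Type} (G : Arena Q Ag Act AP)
    (A : Set Ag) (ρ : G.InfRun) (i : ℕ) :
    G.liftS A ρ i =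
      {r : Q | ∃ ρ' : G.FinRun i,
        (∀ j < i, ∀ a ∈ A, ρ'.ac j a = ρ.ac j a) ∧
        (∀ j ≤ i, G.labelA A (ρ'.st j) = G.labelA A (ρ.st j)) ∧
        ρ'.st i = r} := by
  induction i with
  | zero => exact (G.consistentStates_zero A ρ.ac fun j => G.labelA A (ρ.st j)).symm
  | succ i ih =>
    rw [Arena.liftS, ih]
    exact (G.consistentStates_succ A ρ.ac fun j => G.labelA A (ρ.st j)).symm
end

section
/- In any game arena, for any initialized infinite run ρ, position i, coalition A, and atomic proposition p: (Γ, ρ, i) ⊨ K_A p if and only if p ∈ λ(s) for every s in the second component of ρ̂[i], where ρ̂ is the lift of ρ in the subset arena Γ̂_A. -/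
/-! `S_i` is exactly the set of states `ρ'[i]` reached by runs `ρ'` whose prefix `ρ'[0..i]` is
`A`-indistinguishable from `ρ[0..i]`: by induction on `i`, `out` appends precisely one
indistinguishable step. Seriality is what lets every such finite prefix be completed to an
infinite run, so `K_A p` at `(ρ, i)` says that `p` holds on all of `S_i`. -/

namespace Arena

variable {Q Ag Act AP : Type} {G : Arena Q Ag Act AP} {A : Set Ag}

noncomputable def extendPrefix (hser : ∀ q : Q, ∀ c : Ag → Act, ∃ q' : Q, G.delta q c q')
    (st : ℕ → Q) (ac : ℕ → Ag → Act) (i : ℕ) : ℕ → Q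
  | 0 => st 0
  | n + 1 => if n < i then st (n + 1) else (hser (extendPrefix hser st ac i n) (ac n)).choose

theorem extendPrefix_of_le (hser : ∀ q : Q, ∀ c : Ag → Act, ∃ q' : Q, G.delta q c q')
    {st : ℕ → Q} {ac : ℕ → Ag → Act} {i n : ℕ} (hn : n ≤ i) :
    extendPrefix hser st ac i n = st n := by
  cases n with
  | zero => rfl
  | succ m => simp [extendPrefix, Nat.lt_of_succ_le hn]

theorem exists_run_of_prefix (hser : ∀ q : Q, ∀ c : Ag → Act, ∃ q' : Q, G.delta q c q')
    {st : ℕ → Q} {ac : ℕ → Ag → Act} {i : ℕ}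
    (h0 : st 0 ∈ G.init) (hstep : ∀ j < i, G.delta (st j) (ac j) (st (j + 1))) :
    ∃ ρ' : G.InfRun, (∀ j ≤ i, ρ'.st j = st j) ∧ ∀ j, ρ'.ac j = ac j := by
  refine ⟨⟨extendPrefix hser st ac i, ac, h0, fun j => ?_⟩,
    fun j hj => extendPrefix_of_le hser hj, fun _ => rfl⟩
  by_cases hj : j < i
  · rw [extendPrefix_of_le hser hj.le, extendPrefix_of_le hser hj]
    exact hstep j hj
  · simp only [extendPrefix, hj, if_false]
    exact Exists.choose_spec _

theorem InfRun.exists_snoc (hser : ∀ q : Q, ∀ c : Ag → Act, ∃ q' : Q, G.delta q c q')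
    (ρ' : G.InfRun) {i : ℕ} {c : Ag → Act} {s : Q}
    (hs : G.delta (ρ'.st i) c s) :
    ∃ ρ'' : G.InfRun, (∀ j ≤ i, ρ''.st j = ρ'.st j) ∧ (∀ j < i, ρ''.ac j = ρ'.ac j) ∧
      ρ''.ac i = c ∧ ρ''.st (i + 1) = s := by
  obtain ⟨ρ'', hst, hac⟩ := exists_run_of_prefix (st := Function.update ρ'.st (i + 1) s)
    (ac := Function.update ρ'.ac i c) (i := i + 1) hser ρ'.init_mem fun j hj => by
      rcases Nat.lt_add_one_iff_lt_or_eq.mp hj with hj | rfl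
      · simpa [Function.update_of_ne hj.ne, Function.update_of_ne (by omega : j + 1 ≠ i + 1),
          Function.update_of_ne (by omega : j ≠ i + 1)] using ρ'.step j
      · simpa using hs
  refine ⟨ρ'', fun j hj => ?_, fun j hj => ?_, by simp [hac], by simp [hst]⟩
  · simp [hst j (by omega), Function.update_of_ne (by omega : j ≠ i + 1)]
  · simp [hac, Function.update_of_ne hj.ne]

theorem simPrefix_congr {ρ ρ' ρ'' : G.InfRun} {i : ℕ} (hst : ∀ j ≤ i, ρ''.st j = ρ'.st j)
    (hac : ∀ j < i, ρ''.ac j = ρ'.ac j) : G.SimPrefix A ρ'' ρ i ↔ G.SimPrefix A ρ' ρ i := by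
  refine and_congr (forall₂_congr fun j hj => ?_) (forall₂_congr fun j hj => ?_)
  · rw [hac j hj]
  · rw [hst j hj]

theorem simPrefix_succ_iff {ρ ρ' : G.InfRun} {i : ℕ} :
    G.SimPrefix A ρ' ρ (i + 1) ↔ G.SimPrefix A ρ' ρ i ∧ (∀ a ∈ A, ρ'.ac i a = ρ.ac i a) ∧
      G.labelA A (ρ'.st (i + 1)) = G.labelA A (ρ.st (i + 1)) := by
  simp only [SimPrefix, Nat.lt_add_one_iff_lt_or_eq, Nat.le_add_one_iff, or_imp, forall_and,
    forall_eq]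
  tauto

theorem st_mem_liftS_of_simPrefix {ρ ρ' : G.InfRun} {i : ℕ} (h : G.SimPrefix A ρ' ρ i) :
    ρ'.st i ∈ G.liftS A ρ i := by
  induction i generalizing ρ' with
  | zero => exact ⟨ρ'.init_mem, h.2 0 le_rfl⟩
  | succ i ih =>
    obtain ⟨hi, hac, hlabel⟩ := simPrefix_succ_iff.mp h
    exact ⟨ρ'.st i, ih hi, ρ'.ac i, hac, ρ'.step i, hlabel⟩

theorem exists_simPrefix_of_mem_liftS (hser : ∀ q : Q, ∀ c : Ag → Act, ∃ q' : Q, G.delta q c q')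
    {ρ : G.InfRun} {i : ℕ} {s : Q} (hs : s ∈ G.liftS A ρ i) :
    ∃ ρ' : G.InfRun, G.SimPrefix A ρ' ρ i ∧ ρ'.st i = s := by
  induction i generalizing s with
  | zero =>
    obtain ⟨ρ', hst, -⟩ := exists_run_of_prefix (st := fun _ => s) (ac := ρ.ac) (i := 0) hser
      hs.1 nofun
    refine ⟨ρ', ⟨nofun, fun j hj => ?_⟩, hst 0 le_rfl⟩
    rw [Nat.le_zero.mp hj, hst 0 le_rfl]
    exact hs.2
  | succ i ih =>
    obtain ⟨t, ht, c, hc, hdelta, hlabel⟩ := hs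
    obtain ⟨ρ', hsim, rfl⟩ := ih ht
    obtain ⟨ρ'', hst, hac, rfl, rfl⟩ := ρ'.exists_snoc hser hdelta
    exact ⟨ρ'', simPrefix_succ_iff.mpr ⟨(simPrefix_congr hst hac).mpr hsim, hc, hlabel⟩, rfl⟩

theorem liftS_eq_setOf_simPrefix
    (hser : ∀ q : Q, ∀ c : Ag → Act, ∃ q' : Q, G.delta q c q') (ρ : G.InfRun) (i : ℕ) :
    G.liftS A ρ i = {s | ∃ ρ' : G.InfRun, G.SimPrefix A ρ' ρ i ∧ ρ'.st i = s} :=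
  Set.ext fun _ => ⟨exists_simPrefix_of_mem_liftS hser,
    fun ⟨_, hsim, hst⟩ => hst ▸ st_mem_liftS_of_simPrefix hsim⟩

end Arena

/-- assuming every state has an outgoing transition for every
action tuple, `(Γ, ρ, i) ⊨ K_A p` iff `p ∈ λ(s)` for every `s` in the second
component of `ρ̂[i]` (that is, `s ∈ S_i = liftS A ρ i`). -/
theorem knowledge_iff_liftS {Q Ag Act AP : Type} (G : Arena Q Ag Act AP)
    (A : Set Ag) (p : AP) (ρ : G.InfRun) (i : ℕ)
    (hser : ∀ q : Q, ∀ c : Ag → Act, ∃ q' : Q, G.delta q c q') :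
    (∀ ρ' : G.InfRun, G.SimPrefix A ρ' ρ i → p ∈ G.label (ρ'.st i)) ↔
      ∀ s ∈ G.liftS A ρ i, p ∈ G.label s := by
  simp only [Arena.liftS_eq_setOf_simPrefix hser, Set.mem_ofPred_eq, forall_exists_index, and_imp,
    forall_apply_eq_imp_iff₂]
end
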